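/- arXiv:2405.17225 — 4 statements merged into one kernel-verified Lean document; each statement's English description precedes it below -/
import Mathlib

section
/- The reliance is at least the baseline reliance: r ≥ b, where r = E[(Y^a − f(X1^b, X2^a))²] and b = E[(Y^a − f(X1^a, X2^a))²]. -/
open MeasureTheory ProbabilityTheory
open scoped ENNReal

private lemma memLp_mul_int {α : Type*} {m0 : MeasurableSpace α} {μ : Measure α}
    {f g : α → ℝ} (hf : MemLp f 2 μ) (hg : MemLp g 2 μ) :
    Integrable (fun x => f x * g x) μ := by
  have h : (1 : ℝ≥0∞) / 1 = 1 / 2 + 1 / 2 := by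
    rw [one_div, one_div, inv_one, ENNReal.inv_two_add_inv_two]
  have h2 := memLp_one_iff_integrable.mp (hf.smul (r := 1) hg)
  exact h2.congr (Filter.Eventually.of_forall fun x => mul_comm (g x) (f x))

private lemma memLp_two_condexp {α : Type*} {m : MeasurableSpace α} [m0 : MeasurableSpace α]
    {μ : Measure α} (hm : m ≤ m0) [IsFiniteMeasure μ] {g : α → ℝ}
    (hg : MemLp g 2 μ) : MemLp (μ[g|m]) 2 μ := by
  set gL : Lp ℝ 2 μ := hg.toLp g with hgL
  have hcd : ((condExpL2 ℝ ℝ hm gL : α → ℝ)) =ᵐ[μ] μ[g|m] := by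
    refine ae_eq_condExp_of_forall_setIntegral_eq hm (hg.integrable one_le_two) ?_ ?_ ?_
    · intro s _ hμs
      exact integrableOn_condExpL2_of_measure_ne_top hm hμs.ne gL
    · intro s hs hμs
      rw [integral_condExpL2_eq_of_fin_meas_real gL hs hμs.ne]
      exact setIntegral_congr_ae (hm s hs) ((hg.coeFn_toLp).mono fun x hx _ => hx)
    · exact lpMeas.aestronglyMeasurable (condExpL2 ℝ ℝ hm gL)
  exact (Lp.memLp _).ae_eq hcd

private lemma integral_mul_condexp_zero {α : Type*} {m : MeasurableSpace α}
    [m0 : MeasurableSpace α] {μ : Measure α} (hm : m ≤ m0) [IsFiniteMeasure μ]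
    {g h : α → ℝ} (hg : Integrable g μ) (hg0 : μ[g|m] =ᵐ[μ] 0)
    (hh : StronglyMeasurable[m] h) (hint : Integrable (fun x => h x * g x) μ) :
    ∫ x, h x * g x ∂μ = 0 := by
  have h1 : μ[h * g|m] =ᵐ[μ] (0 : α → ℝ) := by
    refine (condExp_mul_of_stronglyMeasurable_left hh hint hg).trans ?_
    filter_upwards [hg0] with x hx
    simp [hx]
  calc ∫ x, h x * g x ∂μ = ∫ x, (μ[h * g|m]) x ∂μ :=
        (integral_condExp (μ := μ) (f := h * g) hm).symm
    _ = 0 := by rw [integral_congr_ae h1]; simp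

private lemma aux_orth {α : Type*} {m : MeasurableSpace α} [m0 : MeasurableSpace α]
    {μ : Measure α} (hm : m ≤ m0) [IsProbabilityMeasure μ]
    {Z g : α → ℝ} (hZ : Integrable Z μ) (hgi : Integrable g μ)
    (hfc : g =ᵐ[μ] μ[Z|m]) {h : α → ℝ} (hh : StronglyMeasurable[m] h)
    (hint : Integrable (fun x => h x * (Z x - g x)) μ) :
    ∫ x, h x * (Z x - g x) ∂μ = 0 := by
  have hg0 : μ[Z - g|m] =ᵐ[μ] 0 := by
    refine (condExp_sub hZ hgi m).trans ?_
    have h1 : μ[g|m] =ᵐ[μ] μ[Z|m] :=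
      (condExp_congr_ae hfc).trans (condExp_condExp_of_le le_rfl hm)
    filter_upwards [h1] with x hx
    simp [Pi.sub_apply, hx]
  exact integral_mul_condexp_zero hm (hZ.sub hgi) hg0 hh hint


/-- The reliance is at least the baseline reliance: `r ≥ b`, where
`r = E[(Yᵃ − f(X1ᵇ, X2ᵃ))²]` is computed over the coupling law
`P_{Y,X1,X2} ⊗ P_{X1}` of `(Yᵃ, X1ᵃ, X2ᵃ, X1ᵇ)` (with the independent copy `X1ᵇ`
shuffled in) and `b = E[(Yᵃ − f(X1ᵃ, X2ᵃ))²]` is computed over `P_{Y,X1,X2}`.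
Here `f(x1, x2) = E[Y ∣ X1 = x1, X2 = x2]` is the oracle prediction, the product
of the marginal laws of `X1` and `X2` is absolutely continuous with respect to
their joint law, `Y` is square-integrable, and `f(X1ᵇ, X2ᵃ)` is square-integrable. -/
theorem reliance_ge_baseline
    {Ω : Type*} [MeasurableSpace Ω] (P : Measure Ω) [IsProbabilityMeasure P]
    {𝒳1 𝒳2 : Type*} [MeasurableSpace 𝒳1] [MeasurableSpace 𝒳2]
    (Y : Ω → ℝ) (X1 : Ω → 𝒳1) (X2 : Ω → 𝒳2)
    (hY : Measurable Y) (hX1 : Measurable X1) (hX2 : Measurable X2)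
    (hY2 : MemLp Y 2 P)
    (f : 𝒳1 → 𝒳2 → ℝ)
    (hfmeas : Measurable (fun p : 𝒳1 × 𝒳2 => f p.1 p.2))
    -- `f` is a version of the conditional expectation `E[Y ∣ X1, X2]`
    (hf : (fun ω => f (X1 ω) (X2 ω)) =ᵐ[P]
      P[Y | MeasurableSpace.comap (fun ω => (X1 ω, X2 ω)) inferInstance])
    -- absolute continuity of the product of marginals w.r.t. the joint law
    (hac : (P.map X1).prod (P.map X2) ≪ P.map (fun ω => (X1 ω, X2 ω)))
    -- `f(X1ᵇ, X2ᵃ)` is square-integrable over the coupling law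
    (hf2 : MemLp (fun p : (ℝ × 𝒳1 × 𝒳2) × 𝒳1 => f p.2 p.1.2.2) 2
      ((P.map (fun ω => (Y ω, X1 ω, X2 ω))).prod (P.map X1)))
    (r b : ℝ)
    (hr : r = ∫ p, (p.1.1 - f p.2 p.1.2.2) ^ 2
      ∂((P.map (fun ω => (Y ω, X1 ω, X2 ω))).prod (P.map X1)))
    (hb : b = ∫ q, (q.1 - f q.2.1 q.2.2) ^ 2
      ∂(P.map (fun ω => (Y ω, X1 ω, X2 ω)))) :
    b ≤ r := by
  have hX12 : Measurable fun ω => (X1 ω, X2 ω) := hX1.prodMk hX2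
  have hT : Measurable fun ω => (Y ω, X1 ω, X2 ω) := hY.prodMk hX12
  have hm : MeasurableSpace.comap (fun ω => (X1 ω, X2 ω)) inferInstance ≤
      ‹MeasurableSpace Ω› := hX12.comap_le
  set ν : Measure (ℝ × 𝒳1 × 𝒳2) := P.map (fun ω => (Y ω, X1 ω, X2 ω)) with hν
  set m1 : Measure 𝒳1 := P.map X1 with hm1
  haveI : IsProbabilityMeasure ν := Measure.isProbabilityMeasure_map hT.aemeasurable
  haveI : IsProbabilityMeasure m1 := Measure.isProbabilityMeasure_map hX1.aemeasurable
  set μ : Measure ((ℝ × 𝒳1 × 𝒳2) × 𝒳1) := ν.prod m1 with hμ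
  haveI : IsProbabilityMeasure μ := by rw [hμ]; infer_instance
  -- the oracle prediction as a function on Ω
  set fP : Ω → ℝ := fun ω => f (X1 ω) (X2 ω) with hfPdef
  have hfPm : Measurable fP := hfmeas.comp hX12
  have hfP2 : MemLp fP 2 P := (memLp_two_condexp hm hY2).ae_eq hf.symm
  have hYint : Integrable Y P := hY2.integrable one_le_two
  have hfPint : Integrable fP P := hfP2.integrable one_le_two
  -- measure-preserving projection
  have hfstMP : MeasurePreserving (Prod.fst : (ℝ × 𝒳1 × 𝒳2) × 𝒳1 → ℝ × 𝒳1 × 𝒳2) μ ν := by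
    constructor
    · exact measurable_fst
    · rw [hμ, Measure.map_fst_prod, measure_univ, one_smul]
  -- square integrability of the three coordinates on the coupling space
  have hmeasf2 : Measurable fun q : ℝ × 𝒳1 × 𝒳2 => f q.2.1 q.2.2 :=
    hfmeas.comp ((measurable_fst.comp measurable_snd).prodMk
      (measurable_snd.comp measurable_snd))
  have hYν : MemLp (fun q : ℝ × 𝒳1 × 𝒳2 => q.1) 2 ν :=
    (memLp_map_measure_iff (g := fun q : ℝ × 𝒳1 × 𝒳2 => q.1)
      measurable_fst.aestronglyMeasurable hT.aemeasurable).mpr hY2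
  have hfν : MemLp (fun q : ℝ × 𝒳1 × 𝒳2 => f q.2.1 q.2.2) 2 ν :=
    (memLp_map_measure_iff (g := fun q : ℝ × 𝒳1 × 𝒳2 => f q.2.1 q.2.2)
      hmeasf2.aestronglyMeasurable hT.aemeasurable).mpr hfP2
  have hA : MemLp (fun p : (ℝ × 𝒳1 × 𝒳2) × 𝒳1 => p.1.1) 2 μ :=
    hYν.comp_measurePreserving hfstMP
  have hB : MemLp (fun p : (ℝ × 𝒳1 × 𝒳2) × 𝒳1 => f p.1.2.1 p.1.2.2) 2 μ :=
    hfν.comp_measurePreserving hfstMP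
  have hC : MemLp (fun p : (ℝ × 𝒳1 × 𝒳2) × 𝒳1 => f p.2 p.1.2.2) 2 μ := hf2
  have hAB : MemLp (fun p : (ℝ × 𝒳1 × 𝒳2) × 𝒳1 =>
      p.1.1 - f p.1.2.1 p.1.2.2) 2 μ := hA.sub hB
  have hBC : MemLp (fun p : (ℝ × 𝒳1 × 𝒳2) × 𝒳1 =>
      f p.1.2.1 p.1.2.2 - f p.2 p.1.2.2) 2 μ := hB.sub hC
  have hint1 : Integrable (fun p : (ℝ × 𝒳1 × 𝒳2) × 𝒳1 =>
      (p.1.1 - f p.1.2.1 p.1.2.2) ^ 2) μ := hAB.integrable_sq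
  have hint2 : Integrable (fun p : (ℝ × 𝒳1 × 𝒳2) × 𝒳1 =>
      (f p.1.2.1 p.1.2.2 - f p.2 p.1.2.2) ^ 2) μ := hBC.integrable_sq
  have hint3 : Integrable (fun p : (ℝ × 𝒳1 × 𝒳2) × 𝒳1 =>
      (p.1.1 - f p.1.2.1 p.1.2.2) * (f p.1.2.1 p.1.2.2 - f p.2 p.1.2.2)) μ :=
    memLp_mul_int hAB hBC
  -- b as an integral over the coupling measure
  have hGm : Measurable fun q : ℝ × 𝒳1 × 𝒳2 => (q.1 - f q.2.1 q.2.2) ^ 2 :=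
    ((measurable_fst.sub (hfmeas.comp ((measurable_fst.comp measurable_snd).prodMk
      (measurable_snd.comp measurable_snd)))).pow_const 2)
  have hbμ : b = ∫ p, (p.1.1 - f p.1.2.1 p.1.2.2) ^ 2 ∂μ := by
    rw [hb, ← hfstMP.map_eq]
    exact integral_map measurable_fst.aemeasurable hGm.aestronglyMeasurable
  -- decomposition of r
  have hrsplit : r = b + ∫ p, (f p.1.2.1 p.1.2.2 - f p.2 p.1.2.2) ^ 2 ∂μ
      + 2 * ∫ p, (p.1.1 - f p.1.2.1 p.1.2.2) * (f p.1.2.1 p.1.2.2 - f p.2 p.1.2.2) ∂μ := by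
    rw [hbμ, hr]
    have heq : ∀ p : (ℝ × 𝒳1 × 𝒳2) × 𝒳1, (p.1.1 - f p.2 p.1.2.2) ^ 2
        = (p.1.1 - f p.1.2.1 p.1.2.2) ^ 2 + ((f p.1.2.1 p.1.2.2 - f p.2 p.1.2.2) ^ 2
          + 2 * ((p.1.1 - f p.1.2.1 p.1.2.2) * (f p.1.2.1 p.1.2.2 - f p.2 p.1.2.2))) :=
      fun p => by ring
    calc ∫ p, (p.1.1 - f p.2 p.1.2.2) ^ 2 ∂μ
        = ∫ p, ((p.1.1 - f p.1.2.1 p.1.2.2) ^ 2 + ((f p.1.2.1 p.1.2.2 - f p.2 p.1.2.2) ^ 2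
          + 2 * ((p.1.1 - f p.1.2.1 p.1.2.2) * (f p.1.2.1 p.1.2.2 - f p.2 p.1.2.2)))) ∂μ :=
          integral_congr_ae (Filter.Eventually.of_forall fun p => heq p)
      _ = (∫ p, (p.1.1 - f p.1.2.1 p.1.2.2) ^ 2 ∂μ)
          + ∫ p, ((f p.1.2.1 p.1.2.2 - f p.2 p.1.2.2) ^ 2
            + 2 * ((p.1.1 - f p.1.2.1 p.1.2.2) * (f p.1.2.1 p.1.2.2 - f p.2 p.1.2.2))) ∂μ :=
          integral_add hint1 (hint2.add (hint3.const_mul 2))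
      _ = (∫ p, (p.1.1 - f p.1.2.1 p.1.2.2) ^ 2 ∂μ)
          + ((∫ p, (f p.1.2.1 p.1.2.2 - f p.2 p.1.2.2) ^ 2 ∂μ)
            + ∫ p, 2 * ((p.1.1 - f p.1.2.1 p.1.2.2) * (f p.1.2.1 p.1.2.2 - f p.2 p.1.2.2)) ∂μ) := by
          rw [integral_add hint2 (hint3.const_mul 2)]
      _ = _ := by
          rw [integral_const_mul]
          ring
  -- the cross term vanishes
  have hfPsm : StronglyMeasurable[MeasurableSpace.comap (fun ω => (X1 ω, X2 ω))
      inferInstance] fP :=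
    ((hfmeas.comp (Measurable.of_comap_le le_rfl))).stronglyMeasurable
  have hcross : ∫ p, (p.1.1 - f p.1.2.1 p.1.2.2) * (f p.1.2.1 p.1.2.2 - f p.2 p.1.2.2) ∂μ
      = 0 := by
    have hintB : Integrable (fun p : (ℝ × 𝒳1 × 𝒳2) × 𝒳1 =>
        (p.1.1 - f p.1.2.1 p.1.2.2) * f p.1.2.1 p.1.2.2) μ := memLp_mul_int hAB hB
    have hintC : Integrable (fun p : (ℝ × 𝒳1 × 𝒳2) × 𝒳1 =>
        (p.1.1 - f p.1.2.1 p.1.2.2) * f p.2 p.1.2.2) μ := memLp_mul_int hAB hC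
    have hmeasB : Measurable fun q : ℝ × 𝒳1 × 𝒳2 => (q.1 - f q.2.1 q.2.2) * f q.2.1 q.2.2 :=
      (measurable_fst.sub (hfmeas.comp ((measurable_fst.comp measurable_snd).prodMk
        (measurable_snd.comp measurable_snd)))).mul
        (hfmeas.comp ((measurable_fst.comp measurable_snd).prodMk
          (measurable_snd.comp measurable_snd)))
    have hterm1 : ∫ p, (p.1.1 - f p.1.2.1 p.1.2.2) * f p.1.2.1 p.1.2.2 ∂μ = 0 := by
      have e1 : ∫ p : (ℝ × 𝒳1 × 𝒳2) × 𝒳1,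
          (p.1.1 - f p.1.2.1 p.1.2.2) * f p.1.2.1 p.1.2.2 ∂μ
          = ∫ q : ℝ × 𝒳1 × 𝒳2, (q.1 - f q.2.1 q.2.2) * f q.2.1 q.2.2 ∂ν := by
        rw [← hfstMP.map_eq]
        exact (integral_map measurable_fst.aemeasurable hmeasB.aestronglyMeasurable).symm
      have e2 : ∫ q : ℝ × 𝒳1 × 𝒳2, (q.1 - f q.2.1 q.2.2) * f q.2.1 q.2.2 ∂ν
          = ∫ ω, fP ω * (Y ω - fP ω) ∂P := by
        rw [hν]
        rw [integral_map hT.aemeasurable hmeasB.aestronglyMeasurable]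
        exact integral_congr_ae (Filter.Eventually.of_forall fun ω => mul_comm _ _)
      rw [e1, e2]
      exact aux_orth hm hYint hfPint hf hfPsm (memLp_mul_int hfP2 (hY2.sub hfP2))
    have hterm2 : ∫ p, (p.1.1 - f p.1.2.1 p.1.2.2) * f p.2 p.1.2.2 ∂μ = 0 := by
      have hFub : ∫ p, (p.1.1 - f p.1.2.1 p.1.2.2) * f p.2 p.1.2.2 ∂μ
          = ∫ x1b, ∫ q : ℝ × 𝒳1 × 𝒳2, (q.1 - f q.2.1 q.2.2) * f x1b q.2.2 ∂ν ∂m1 :=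
        integral_prod_symm _ hintC
      rw [hFub]
      have hsec : ∀ᵐ x1b ∂m1, Integrable (fun q : ℝ × 𝒳1 × 𝒳2 =>
          (q.1 - f q.2.1 q.2.2) * f x1b q.2.2) ν := by
        have := hintC.prod_left_ae
        exact this
      have hzero : ∀ᵐ x1b ∂m1, (∫ q, (q.1 - f q.2.1 q.2.2) * f x1b q.2.2 ∂ν) = 0 := by
        filter_upwards [hsec] with x1b hx1b
        have hmeasS : Measurable fun q : ℝ × 𝒳1 × 𝒳2 =>
            (q.1 - f q.2.1 q.2.2) * f x1b q.2.2 :=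
          (measurable_fst.sub (hfmeas.comp ((measurable_fst.comp measurable_snd).prodMk
            (measurable_snd.comp measurable_snd)))).mul
            (hfmeas.comp (measurable_const.prodMk (measurable_snd.comp measurable_snd)))
        have e3 : ∫ q : ℝ × 𝒳1 × 𝒳2, (q.1 - f q.2.1 q.2.2) * f x1b q.2.2 ∂ν
            = ∫ ω, (Y ω - fP ω) * f x1b (X2 ω) ∂P := by
          rw [hν]
          exact integral_map hT.aemeasurable hmeasS.aestronglyMeasurable
        rw [e3]
        have hPint : Integrable (fun ω => (Y ω - fP ω) * f x1b (X2 ω)) P := by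
          rw [hν] at hx1b
          exact (integrable_map_measure hmeasS.aestronglyMeasurable hT.aemeasurable).mp hx1b
        have hswap : ∫ ω, (Y ω - fP ω) * f x1b (X2 ω) ∂P
            = ∫ ω, f x1b (X2 ω) * (Y ω - fP ω) ∂P :=
          integral_congr_ae (Filter.Eventually.of_forall fun ω => mul_comm _ _)
        have hhm : StronglyMeasurable[MeasurableSpace.comap (fun ω => (X1 ω, X2 ω))
            inferInstance] fun ω => f x1b (X2 ω) :=
          ((hfmeas.comp measurable_prodMk_left).comp
            (measurable_snd.comp (Measurable.of_comap_le le_rfl))).stronglyMeasurable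
        calc ∫ ω, (Y ω - fP ω) * f x1b (X2 ω) ∂P
            = ∫ ω, f x1b (X2 ω) * (Y ω - fP ω) ∂P := hswap
          _ = 0 := aux_orth hm hYint hfPint hf hhm
              (hPint.congr (Filter.Eventually.of_forall fun ω => mul_comm _ _))
      rw [integral_congr_ae hzero, integral_zero]
    have hsplit2 : ∫ p, (p.1.1 - f p.1.2.1 p.1.2.2) *
        (f p.1.2.1 p.1.2.2 - f p.2 p.1.2.2) ∂μ
        = ∫ p, (p.1.1 - f p.1.2.1 p.1.2.2) * f p.1.2.1 p.1.2.2 ∂μ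
          - ∫ p, (p.1.1 - f p.1.2.1 p.1.2.2) * f p.2 p.1.2.2 ∂μ := by
      rw [← integral_sub hintB hintC]
      exact integral_congr_ae (Filter.Eventually.of_forall fun p => by ring)
    rw [hsplit2, hterm1, hterm2, sub_zero]
  have hsq : 0 ≤ ∫ p, (f p.1.2.1 p.1.2.2 - f p.2 p.1.2.2) ^ 2 ∂μ :=
    integral_nonneg fun p => sq_nonneg _
  linarith [hrsplit, hcross, hsq]
end

section
/- f(X1^a, X2^a) = f(X1^b, X2^a) holds almost surely with respect to the coupling law P_{X1,X2} ⊗ P_{X1} of (X1^a, X2^a, X1^b) if and only if f(X1, X2) = g(X2) holds almost surely with respect to P_{X1,X2}, where g(x2) = E[Y | X2 = x2]. -/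
open MeasureTheory ProbabilityTheory

/-- `f(X1ᵃ, X2ᵃ) = f(X1ᵇ, X2ᵃ)` holds almost surely with respect to
the coupling law `P_{X1,X2} ⊗ P_{X1}` of `(X1ᵃ, X2ᵃ, X1ᵇ)` if and only if
`f(X1, X2) = g(X2)` holds almost surely with respect to `P_{X1,X2}`, where
`f(x1, x2) = E[Y ∣ X1 = x1, X2 = x2]` and `g(x2) = E[Y ∣ X2 = x2]`, assuming the
product of the marginal laws of `X1` and `X2` is absolutely continuous with respect
to their joint law. -/
theorem shuffle_invariant_iff_pred_dep_only_on_X2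
    {Ω : Type*} [MeasurableSpace Ω] (P : Measure Ω) [IsProbabilityMeasure P]
    {𝒳1 𝒳2 : Type*} [MeasurableSpace 𝒳1] [MeasurableSpace 𝒳2]
    (Y : Ω → ℝ) (X1 : Ω → 𝒳1) (X2 : Ω → 𝒳2)
    (hY : Measurable Y) (hX1 : Measurable X1) (hX2 : Measurable X2)
    (hY2 : MemLp Y 2 P)
    (f : 𝒳1 → 𝒳2 → ℝ) (g : 𝒳2 → ℝ)
    (hfmeas : Measurable (fun p : 𝒳1 × 𝒳2 => f p.1 p.2))
    (hgmeas : Measurable g)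
    -- `f` is a version of the conditional expectation `E[Y ∣ X1, X2]`
    (hf : (fun ω => f (X1 ω) (X2 ω)) =ᵐ[P]
      P[Y | MeasurableSpace.comap (fun ω => (X1 ω, X2 ω)) inferInstance])
    -- `g` is a version of the conditional expectation `E[Y ∣ X2]`
    (hg : (fun ω => g (X2 ω)) =ᵐ[P]
      P[Y | MeasurableSpace.comap X2 inferInstance])
    -- absolute continuity of the product of marginals w.r.t. the joint law
    (hac : (P.map X1).prod (P.map X2) ≪ P.map (fun ω => (X1 ω, X2 ω))) :
    ((∀ᵐ p ∂((P.map (fun ω => (X1 ω, X2 ω))).prod (P.map X1)),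
        f p.1.1 p.1.2 = f p.2 p.1.2) ↔
      (∀ᵐ q ∂(P.map (fun ω => (X1 ω, X2 ω))), f q.1 q.2 = g q.2)) := by
  classical
  set μ := P.map (fun ω => (X1 ω, X2 ω)) with hμ
  set μ1 := P.map X1 with hμ1
  set μ2 := P.map X2 with hμ2
  have hX12 : Measurable (fun ω => (X1 ω, X2 ω)) := hX1.prodMk hX2
  haveI : IsProbabilityMeasure μ := Measure.isProbabilityMeasure_map hX12.aemeasurable
  haveI : IsProbabilityMeasure μ1 := Measure.isProbabilityMeasure_map hX1.aemeasurable
  haveI : IsProbabilityMeasure μ2 := Measure.isProbabilityMeasure_map hX2.aemeasurable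
  set m12 := MeasurableSpace.comap (fun ω => (X1 ω, X2 ω)) inferInstance with hm12
  set m2 := MeasurableSpace.comap X2 inferInstance with hm2
  have hle : m2 ≤ m12 := by
    rintro s ⟨t, ht, rfl⟩
    refine ⟨Set.univ ×ˢ t, MeasurableSet.univ.prod ht, ?_⟩
    ext ω; simp
  have hm12le := hX12.comap_le (f := fun ω => (X1 ω, X2 ω))
  have hm2le := hX2.comap_le
  have hsnd : μ.map Prod.snd = μ2 := by
    rw [hμ, Measure.map_map measurable_snd hX12]; rfl
  constructor
  · intro H
    -- swap the product
    have Hsw : ∀ᵐ p ∂(μ1.prod μ), f p.2.1 p.2.2 = f p.1 p.2.2 := by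
      rw [← Measure.prod_swap]
      exact (ae_map_iff measurable_swap.aemeasurable
        (measurableSet_eq_fun (hfmeas.comp (measurable_snd.fst.prodMk measurable_snd.snd))
          (hfmeas.comp (measurable_fst.prodMk measurable_snd.snd)))).mpr H
    obtain ⟨a, ha⟩ := (Measure.ae_ae_of_ae_prod Hsw).exists
    -- ha : ∀ᵐ q ∂μ, f q.1 q.2 = f a q.2
    have hPa : (fun ω => f (X1 ω) (X2 ω)) =ᵐ[P] (fun ω => f a (X2 ω)) :=
      ae_of_ae_map hX12.aemeasurable ha
    have hfa_meas : Measurable (fun x2 => f a x2) :=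
      hfmeas.comp (measurable_const.prodMk measurable_id)
    have hint12 : Integrable (fun ω => f (X1 ω) (X2 ω)) P :=
      integrable_condExp.congr hf.symm
    have hinta : Integrable (fun ω => f a (X2 ω)) P := hint12.congr hPa
    have hX2' : @Measurable _ _ m2 _ X2 := fun s hs => ⟨s, hs, rfl⟩
    have hsm : StronglyMeasurable[m2] (fun ω => f a (X2 ω)) :=
      (hfa_meas.comp hX2').stronglyMeasurable
    have hchain : (fun ω => f a (X2 ω)) =ᵐ[P] P[Y | m2] := by
      calc (fun ω => f a (X2 ω))
          = P[(fun ω => f a (X2 ω)) | m2] :=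
            (condExp_of_stronglyMeasurable hm2le hsm hinta).symm
        _ =ᵐ[P] P[(fun ω => f (X1 ω) (X2 ω)) | m2] := condExp_congr_ae hPa.symm
        _ =ᵐ[P] P[P[Y | m12] | m2] := condExp_congr_ae hf
        _ =ᵐ[P] P[Y | m2] := condExp_condExp_of_le hle hm12le
    have hag : ∀ᵐ ω ∂P, f a (X2 ω) = g (X2 ω) := by
      filter_upwards [hchain, hg] with ω h1 h2
      rw [h1, h2]
    have hag2 : ∀ᵐ x2 ∂μ2, f a x2 = g x2 := by
      rw [hμ2, ae_map_iff hX2.aemeasurable (measurableSet_eq_fun hfa_meas hgmeas)]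
      exact hag
    have hagμ : ∀ᵐ q ∂μ, f a q.2 = g q.2 := by
      rw [← hsnd] at hag2
      exact ae_of_ae_map measurable_snd.aemeasurable hag2
    filter_upwards [ha, hagμ] with q h1 h2
    rw [h1, h2]
  · intro hq
    have hSmeas : MeasurableSet {q : 𝒳1 × 𝒳2 | f q.1 q.2 = g q.2} :=
      measurableSet_eq_fun hfmeas (hgmeas.comp measurable_snd)
    -- part (a): first coordinate
    have hfstmap : (μ.prod μ1).map Prod.fst = μ := by
      rw [Measure.map_fst_prod]; simp
    have ha' : ∀ᵐ p ∂(μ.prod μ1), f p.1.1 p.1.2 = g p.1.2 := by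
      rw [← hfstmap] at hq
      exact ae_of_ae_map measurable_fst.aemeasurable hq
    -- part (b): via absolute continuity
    have hq' : ∀ᵐ r ∂(μ1.prod μ2), f r.1 r.2 = g r.2 := by
      have h0 : μ {q : 𝒳1 × 𝒳2 | ¬ f q.1 q.2 = g q.2} = 0 := ae_iff.mp hq
      exact ae_iff.mpr (hac h0)
    have hTmeas : Measurable (fun p : (𝒳1 × 𝒳2) × 𝒳1 => (p.2, p.1.2)) :=
      measurable_snd.prodMk measurable_fst.snd
    have hTmap : (μ.prod μ1).map (fun p : (𝒳1 × 𝒳2) × 𝒳1 => (p.2, p.1.2))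
        = μ1.prod μ2 := by
      have h1 : (fun p : (𝒳1 × 𝒳2) × 𝒳1 => (p.2, p.1.2))
          = (Prod.map id Prod.snd) ∘ Prod.swap := by
        ext p <;> rfl
      rw [h1, ← Measure.map_map (measurable_id.prodMap measurable_snd) measurable_swap,
        Measure.prod_swap, ← Measure.map_prod_map _ _ measurable_id measurable_snd,
        Measure.map_id, hsnd]
    have hb' : ∀ᵐ p ∂(μ.prod μ1), f p.2 p.1.2 = g p.1.2 := by
      rw [← hTmap] at hq'
      exact ae_of_ae_map hTmeas.aemeasurable hq'
    filter_upwards [ha', hb'] with p h1 h2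
    rw [h1, h2]
end

section
/- The excess of reliance over the baseline under square loss equals the mean squared difference of the oracle predictions under the shuffled and unshuffled inputs: r − b = E[(f(X1^b, X2^a) − f(X1^a, X2^a))²], where the expectation is over (X1^a, X2^a) ~ P_{X1,X2} independent of X1^b ~ P_{X1}. -/
open MeasureTheory ProbabilityTheory
open scoped ENNReal

section Aux

variable {α : Type*}

lemma integrable_mul_of_memL2 {mα : MeasurableSpace α} {μ : Measure α} {g h : α → ℝ}
    (hg : MemLp g 2 μ) (hh : MemLp h 2 μ) :
    Integrable (fun x => g x * h x) μ := by
  have h1 : (1 : ℝ≥0∞) / 1 = 1 / 2 + 1 / 2 := by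
    rw [ENNReal.div_add_div_same, one_add_one_eq_two,
      ENNReal.div_self two_ne_zero ENNReal.ofNat_ne_top, div_one]
  have : MemLp (g • h) 1 μ := hh.smul hg
  rw [memLp_one_iff_integrable] at this
  exact this

lemma memL2_condexp {m m0 : MeasurableSpace α} (hm : m ≤ m0) {μ : Measure α}
    [IsProbabilityMeasure μ] {Y : α → ℝ} (hY2 : MemLp Y 2 μ) :
    MemLp (μ[Y|m]) 2 μ := by
  set g : α → ℝ := ((condExpL2 ℝ ℝ hm (hY2.toLp Y) : α →₂[μ] ℝ) : α → ℝ) with hgdef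
  have hgmem : MemLp g 2 μ := Lp.memLp _
  have hgm : AEStronglyMeasurable[m] g μ := aestronglyMeasurable_condExpL2 hm _
  have hae : g =ᵐ[μ] μ[Y|m] := by
    refine ae_eq_condExp_of_forall_setIntegral_eq hm (hY2.integrable one_le_two)
      (fun s _ _ => (hgmem.integrable one_le_two).integrableOn) (fun s hs hμs => ?_) hgm
    have h1 := integral_condExpL2_eq (E' := ℝ) (𝕜 := ℝ) hm (hY2.toLp Y) hs hμs.ne
    rw [h1]
    exact setIntegral_congr_ae (hm s hs) ((hY2.coeFn_toLp).mono fun x hx _ => hx)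
  exact hgmem.ae_eq hae

lemma integral_sub_condexp_mul {m m0 : MeasurableSpace α} (hm : m ≤ m0) {μ : Measure α}
    [IsProbabilityMeasure μ] {Y k : α → ℝ} (hY2 : MemLp Y 2 μ)
    (hkm : StronglyMeasurable[m] k) (hk2 : MemLp k 2 μ) :
    ∫ x, (Y x - (μ[Y|m]) x) * k x ∂μ = 0 := by
  have hYi : Integrable Y μ := hY2.integrable one_le_two
  have hkY : Integrable (k * Y) μ := integrable_mul_of_memL2 hk2 hY2
  have hC2 : MemLp (μ[Y|m]) 2 μ := memL2_condexp hm hY2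
  have hYk : Integrable (fun x => Y x * k x) μ := integrable_mul_of_memL2 hY2 hk2
  have hCk : Integrable (fun x => (μ[Y|m]) x * k x) μ := integrable_mul_of_memL2 hC2 hk2
  have hpull : μ[k * Y|m] =ᵐ[μ] k * μ[Y|m] := condExp_mul_of_stronglyMeasurable_left hkm hkY hYi
  have key : ∫ x, Y x * k x ∂μ = ∫ x, (μ[Y|m]) x * k x ∂μ := by
    calc ∫ x, Y x * k x ∂μ = ∫ x, (k * Y) x ∂μ := by
          simp only [Pi.mul_apply, mul_comm]
      _ = ∫ x, (μ[k * Y|m]) x ∂μ := (integral_condExp hm).symm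
      _ = ∫ x, (k * μ[Y|m]) x ∂μ := integral_congr_ae hpull
      _ = ∫ x, (μ[Y|m]) x * k x ∂μ := by simp only [Pi.mul_apply, mul_comm]
  have hsplit : (fun x => (Y x - (μ[Y|m]) x) * k x)
      = fun x => Y x * k x - (μ[Y|m]) x * k x := by funext x; ring
  rw [hsplit, integral_sub hYk hCk, key, sub_self]

end Aux

/-- The excess of reliance over the baseline under square loss equals
the mean squared difference of the oracle predictions under the shuffled and
unshuffled inputs: `r − b = E[(f(X1ᵇ, X2ᵃ) − f(X1ᵃ, X2ᵃ))²]`, the expectation being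
over `(X1ᵃ, X2ᵃ) ∼ P_{X1,X2}` independent of `X1ᵇ ∼ P_{X1}`. -/
theorem reliance_sub_baseline_eq_mean_sq_diff
    {Ω : Type*} [MeasurableSpace Ω] (P : Measure Ω) [IsProbabilityMeasure P]
    {𝒳1 𝒳2 : Type*} [MeasurableSpace 𝒳1] [MeasurableSpace 𝒳2]
    (Y : Ω → ℝ) (X1 : Ω → 𝒳1) (X2 : Ω → 𝒳2)
    (hY : Measurable Y) (hX1 : Measurable X1) (hX2 : Measurable X2)
    (hY2 : MemLp Y 2 P)
    (f : 𝒳1 → 𝒳2 → ℝ)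
    (hfmeas : Measurable (fun p : 𝒳1 × 𝒳2 => f p.1 p.2))
    -- `f` is a version of the conditional expectation `E[Y ∣ X1, X2]`
    (hf : (fun ω => f (X1 ω) (X2 ω)) =ᵐ[P]
      P[Y | MeasurableSpace.comap (fun ω => (X1 ω, X2 ω)) inferInstance])
    -- absolute continuity of the product of marginals w.r.t. the joint law
    (hac : (P.map X1).prod (P.map X2) ≪ P.map (fun ω => (X1 ω, X2 ω)))
    -- `f(X1ᵇ, X2ᵃ)` is square-integrable over the coupling law
    (hf2 : MemLp (fun p : (ℝ × 𝒳1 × 𝒳2) × 𝒳1 => f p.2 p.1.2.2) 2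
      ((P.map (fun ω => (Y ω, X1 ω, X2 ω))).prod (P.map X1)))
    (r b : ℝ)
    (hr : r = ∫ p, (p.1.1 - f p.2 p.1.2.2) ^ 2
      ∂((P.map (fun ω => (Y ω, X1 ω, X2 ω))).prod (P.map X1)))
    (hb : b = ∫ q, (q.1 - f q.2.1 q.2.2) ^ 2
      ∂(P.map (fun ω => (Y ω, X1 ω, X2 ω)))) :
    r - b = ∫ p, (f p.2 p.1.2 - f p.1.1 p.1.2) ^ 2
      ∂((P.map (fun ω => (X1 ω, X2 ω))).prod (P.map X1)) := by
  have hT3 : Measurable (fun ω => (Y ω, X1 ω, X2 ω)) := hY.prodMk (hX1.prodMk hX2)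
  have hT : Measurable (fun ω => (X1 ω, X2 ω)) := hX1.prodMk hX2
  have hm : MeasurableSpace.comap (fun ω => (X1 ω, X2 ω)) inferInstance
      ≤ ‹MeasurableSpace Ω› := measurable_iff_comap_le.mp hT
  set F : Ω → ℝ := fun ω => f (X1 ω) (X2 ω) with hFdef
  have hFmeas : Measurable F := hfmeas.comp hT
  have hFm2 : MemLp F 2 P := (memL2_condexp hm hY2).ae_eq hf.symm
  set G : Ω × Ω → ℝ := fun q => f (X1 q.2) (X2 q.1) with hGdef
  have hGmeas : Measurable G := hfmeas.comp ((hX1.comp measurable_snd).prodMk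
    (hX2.comp measurable_fst))
  -- product measure identifications
  have hprodr : (P.map (fun ω => (Y ω, X1 ω, X2 ω))).prod (P.map X1)
      = (P.prod P).map (Prod.map (fun ω => (Y ω, X1 ω, X2 ω)) X1) :=
    Measure.map_prod_map _ _ hT3 hX1
  have hprodR : (P.map (fun ω => (X1 ω, X2 ω))).prod (P.map X1)
      = (P.prod P).map (Prod.map (fun ω => (X1 ω, X2 ω)) X1) :=
    Measure.map_prod_map _ _ hT hX1
  have hmapfst : (P.prod P).map Prod.fst = P := by
    rw [Measure.map_fst_prod]; simp
  -- transfer of MemLp along `fst`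
  have memfst : ∀ g : Ω → ℝ, MemLp g 2 P → MemLp (fun q : Ω × Ω => g q.1) 2 (P.prod P) := by
    intro g hg
    have h1 : MemLp g 2 ((P.prod P).map Prod.fst) := by rw [hmapfst]; exact hg
    have h2 : AEStronglyMeasurable g ((P.prod P).map Prod.fst) := by
      rw [hmapfst]; exact hg.aestronglyMeasurable
    exact (memLp_map_measure_iff h2 measurable_fst.aemeasurable).1 h1
  -- square-integrability facts on `P.prod P`
  have hG2 : MemLp G 2 (P.prod P) := by
    have hgm : Measurable (fun p : (ℝ × 𝒳1 × 𝒳2) × 𝒳1 => f p.2 p.1.2.2) :=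
      hfmeas.comp (measurable_snd.prodMk measurable_fst.snd.snd)
    have h := hf2
    rw [hprodr, memLp_map_measure_iff hgm.aestronglyMeasurable
      (hT3.prodMap hX1).aemeasurable] at h
    exact h
  have hFq : MemLp (fun q : Ω × Ω => F q.1) 2 (P.prod P) := memfst F hFm2
  have hD2 : MemLp (fun q : Ω × Ω => Y q.1 - F q.1) 2 (P.prod P) :=
    memfst (fun ω => Y ω - F ω) (hY2.sub hFm2)
  have hE2 : MemLp (fun q : Ω × Ω => G q - F q.1) 2 (P.prod P) := hG2.sub hFq
  have hDsq : Integrable (fun q : Ω × Ω => (Y q.1 - F q.1) ^ 2) (P.prod P) :=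
    (memLp_two_iff_integrable_sq hD2.aestronglyMeasurable).mp hD2
  have hEsq : Integrable (fun q : Ω × Ω => (G q - F q.1) ^ 2) (P.prod P) :=
    (memLp_two_iff_integrable_sq hE2.aestronglyMeasurable).mp hE2
  have hDE : Integrable (fun q : Ω × Ω => (Y q.1 - F q.1) * (G q - F q.1)) (P.prod P) :=
    integrable_mul_of_memL2 hD2 hE2
  -- rewrite r, b and the RHS as integrals over `P.prod P`
  have hrP : r = ∫ q : Ω × Ω, (Y q.1 - G q) ^ 2 ∂(P.prod P) := by
    have hφ : Measurable (fun p : (ℝ × 𝒳1 × 𝒳2) × 𝒳1 => (p.1.1 - f p.2 p.1.2.2) ^ 2) :=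
      (measurable_fst.fst.sub (hfmeas.comp
        (measurable_snd.prodMk measurable_fst.snd.snd))).pow_const 2
    rw [hr, hprodr, integral_map (hT3.prodMap hX1).aemeasurable hφ.aestronglyMeasurable]
    rfl
  have hbP : b = ∫ ω, (Y ω - F ω) ^ 2 ∂P := by
    have hφ : Measurable (fun q : ℝ × 𝒳1 × 𝒳2 => (q.1 - f q.2.1 q.2.2) ^ 2) :=
      (measurable_fst.sub (hfmeas.comp (measurable_snd.fst.prodMk
        measurable_snd.snd))).pow_const 2
    rw [hb, integral_map hT3.aemeasurable hφ.aestronglyMeasurable]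
  have hbPP : ∫ ω, (Y ω - F ω) ^ 2 ∂P = ∫ q : Ω × Ω, (Y q.1 - F q.1) ^ 2 ∂(P.prod P) := by
    conv_lhs => rw [← hmapfst]
    rw [integral_map (f := fun ω => (Y ω - F ω) ^ 2) measurable_fst.aemeasurable
      ((hY.sub hFmeas).pow_const 2).aestronglyMeasurable]
  have hRHS : ∫ p, (f p.2 p.1.2 - f p.1.1 p.1.2) ^ 2
        ∂((P.map (fun ω => (X1 ω, X2 ω))).prod (P.map X1))
      = ∫ q : Ω × Ω, (G q - F q.1) ^ 2 ∂(P.prod P) := by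
    have hφ : Measurable (fun p : (𝒳1 × 𝒳2) × 𝒳1 => (f p.2 p.1.2 - f p.1.1 p.1.2) ^ 2) :=
      ((hfmeas.comp (measurable_snd.prodMk measurable_fst.snd)).sub
        (hfmeas.comp measurable_fst)).pow_const 2
    rw [hprodR, integral_map (hT.prodMap hX1).aemeasurable hφ.aestronglyMeasurable]
    rfl
  -- the cross term vanishes
  have hcross : ∫ q : Ω × Ω, (Y q.1 - F q.1) * (G q - F q.1) ∂(P.prod P) = 0 := by
    rw [integral_prod_symm _ hDE]
    have hGsq : Integrable (fun q : Ω × Ω => G q ^ 2) (P.prod P) :=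
      (memLp_two_iff_integrable_sq hG2.aestronglyMeasurable).mp hG2
    have hae : ∀ᵐ ω' ∂P, ∫ ω, (Y ω - F ω) * (G (ω, ω') - F ω) ∂P = 0 := by
      filter_upwards [hGsq.prod_left_ae] with ω' hsl
      have hslm : Measurable (fun ω => f (X1 ω') (X2 ω)) :=
        hfmeas.comp (measurable_const.prodMk hX2)
      have hkmem : MemLp (fun ω => f (X1 ω') (X2 ω)) 2 P :=
        (memLp_two_iff_integrable_sq hslm.aestronglyMeasurable).mpr hsl
      have hk2 : MemLp (fun ω => f (X1 ω') (X2 ω) - (P[Y| MeasurableSpace.comap (fun ω => (X1 ω, X2 ω)) inferInstance]) ω) 2 P :=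
        hkmem.sub (memL2_condexp hm hY2)
      have hkm : StronglyMeasurable[MeasurableSpace.comap (fun ω => (X1 ω, X2 ω)) inferInstance]
          (fun ω => f (X1 ω') (X2 ω) - (P[Y| MeasurableSpace.comap (fun ω => (X1 ω, X2 ω)) inferInstance]) ω) := by
        have hTm : Measurable[MeasurableSpace.comap (fun ω => (X1 ω, X2 ω)) inferInstance]
            (fun ω => (X1 ω, X2 ω)) := measurable_iff_comap_le.mpr le_rfl
        have h1 : Measurable[MeasurableSpace.comap (fun ω => (X1 ω, X2 ω)) inferInstance]
            (fun ω => f (X1 ω') (X2 ω)) :=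
          (hfmeas.comp (measurable_const.prodMk measurable_snd)).comp hTm
        exact h1.stronglyMeasurable.sub stronglyMeasurable_condExp
      calc ∫ ω, (Y ω - F ω) * (G (ω, ω') - F ω) ∂P
          = ∫ ω, (Y ω - (P[Y| MeasurableSpace.comap (fun ω => (X1 ω, X2 ω)) inferInstance]) ω) * (f (X1 ω') (X2 ω) - (P[Y| MeasurableSpace.comap (fun ω => (X1 ω, X2 ω)) inferInstance]) ω) ∂P := by
            refine integral_congr_ae ?_
            filter_upwards [hf] with ω hω
            rw [hω]
        _ = 0 := integral_sub_condexp_mul hm hY2 hkm hk2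
    calc ∫ ω' , ∫ ω, (Y ω - F ω) * (G (ω, ω') - F ω) ∂P ∂P
        = ∫ ω' , (0 : ℝ) ∂P := integral_congr_ae hae
      _ = 0 := integral_zero _ _
  -- put everything together
  have hexpand : (fun q : Ω × Ω => (Y q.1 - G q) ^ 2)
      = fun q => (Y q.1 - F q.1) ^ 2 - 2 * ((Y q.1 - F q.1) * (G q - F q.1))
          + (G q - F q.1) ^ 2 := by
    funext q; ring
  have hA : Integrable (fun q : Ω × Ω =>
      (Y q.1 - F q.1) ^ 2 - 2 * ((Y q.1 - F q.1) * (G q - F q.1))) (P.prod P) :=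
    hDsq.sub (hDE.const_mul 2)
  rw [hrP, hbP, hbPP, hRHS, hexpand, integral_add hA hEsq,
    integral_sub hDsq (hDE.const_mul 2), integral_const_mul 2 _, hcross]
  ring
end

section
/- With partially observed outcomes, the conditional mean is partially identified with the interval bounds: E[Y · 1{Z = 1} | 𝒢] ≤ E[Y | 𝒢] ≤ E[Y · 1{Z = 1} | 𝒢] + E[1{Z = 0} | 𝒢] almost surely. -/
open MeasureTheory

/-- With partially observed outcomes, the conditional mean is
partially identified with the interval bounds:
`E[Y ⬝ 1{Z = 1} ∣ 𝒢] ≤ E[Y ∣ 𝒢] ≤ E[Y ⬝ 1{Z = 1} ∣ 𝒢] + E[1{Z = 0} ∣ 𝒢]`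
almost surely, where `Y` is integrable with `0 ≤ Y ≤ 1` a.s., `Z` takes values in
`{0, 1}`, and `𝒢 = m` is a sub-σ-algebra. -/
theorem partial_identification_conditional_mean_bounds
    {Ω : Type*} {m mΩ : MeasurableSpace Ω} (hm : m ≤ mΩ)
    (P : @Measure Ω mΩ) [IsProbabilityMeasure P]
    (Y Z : Ω → ℝ)
    (hYint : Integrable Y P)
    (hY01 : ∀ᵐ ω ∂P, Y ω ∈ Set.Icc (0 : ℝ) 1)
    (hZ : Measurable[mΩ] Z)
    (hZ01 : ∀ ω, Z ω = 0 ∨ Z ω = 1) :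
    ∀ᵐ ω ∂P,
      (P[fun ω' => Y ω' * (if Z ω' = 1 then (1 : ℝ) else 0) | m]) ω ≤ (P[Y | m]) ω ∧
      (P[Y | m]) ω ≤
        (P[fun ω' => Y ω' * (if Z ω' = 1 then (1 : ℝ) else 0) | m]) ω +
          (P[fun ω' => (if Z ω' = 0 then (1 : ℝ) else 0) | m]) ω := by
  have hind1 : Measurable fun ω' => (if Z ω' = 1 then (1 : ℝ) else 0) := by
    exact Measurable.ite (hZ (measurableSet_singleton 1)) measurable_const measurable_const
  have hind0 : Measurable fun ω' => (if Z ω' = 0 then (1 : ℝ) else 0) := by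
    exact Measurable.ite (hZ (measurableSet_singleton 0)) measurable_const measurable_const
  have h1 : Integrable (fun ω' => Y ω' * (if Z ω' = 1 then (1 : ℝ) else 0)) P := by
    have := hYint.bdd_mul (c := 1) (f := fun ω' => (if Z ω' = 1 then (1:ℝ) else 0))
      hind1.aestronglyMeasurable (by filter_upwards with ω; split <;> simp)
    simpa [mul_comm] using this
  have h2 : Integrable (fun ω' => (if Z ω' = 0 then (1 : ℝ) else 0)) P := by
    apply Integrable.mono' (integrable_const (1 : ℝ)) hind0.aestronglyMeasurable
    filter_upwards with ω
    split <;> simp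
  have hle1 : (fun ω' => Y ω' * (if Z ω' = 1 then (1 : ℝ) else 0)) ≤ᵐ[P] Y := by
    filter_upwards [hY01] with ω hω
    split <;> simp [hω.1]
  have hle2 : Y ≤ᵐ[P] fun ω' =>
      Y ω' * (if Z ω' = 1 then (1 : ℝ) else 0) + (if Z ω' = 0 then (1 : ℝ) else 0) := by
    filter_upwards [hY01] with ω hω
    rcases hZ01 ω with h | h <;> simp [h, hω.2]
  have c1 := condExp_mono (m := m) h1 hYint hle1
  have c2 := condExp_mono (m := m) hYint (h1.add h2) hle2
  have cadd := condExp_add (μ := P) (m := m) h1 h2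
  filter_upwards [c1, c2, cadd] with ω h1' h2' h3'
  refine ⟨h1', ?_⟩
  calc (P[Y|m]) ω ≤ _ := h2'
    _ = _ := h3'
    _ = _ := rfl
end
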